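/- Let X₁,…,X_K be independent exponential random variables with mean 1, let σ², P₁,…,P_K, N₁,…,N_K > 0, let b₁,…,b_K > 0 with cumulative sums B_k = Σ_{l=1}^k b_l, and set γ_k = X_k·P_k/σ². Then ℙ( for every k ∈ {1,…,K}: Π_{l=1}^k (1+γ_l)^{N_l} < 2^{B_k} ) = [ Π_{k=1}^K (σ²/(N_k P_k))·e^{σ²/P_k} ] · ∫⋯∫ Π_{k=1}^K x_k^{1/N_k − 1} · x_{k−1}^{−1/N_k} · exp( −(σ²/P_k)·(x_k/x_{k−1})^{1/N_k} ) dx₁ ⋯ dx_K, where x₀ = 1 and the integration region is x₀ < x₁ < 2^{B₁}, x₁ < x₂ < 2^{B₂}, …, x_{K−1} < x_K < 2^{B_K}. -/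

import Mathlib

/-!
Peel off the rounds one at a time. If `x` is the value of `Π_{l<k} (1+γ_l)^{N_l}` before round
`k`, then rounds `k, …, K` are in outage iff `t = x·(1+γ_k)^{N_k} < 2^{B_k}` and rounds
`k+1, …, K` are in outage starting from `t`. Conditioning on `|h_k|²`, which is independent of
the later rounds, writes the probability as an integral against its law `e^{-y} dy`; the
substitution `y ↦ t` turns this into `σ²/(N_k P_k)·e^{σ²/P_k}` times the one-round kernel of
`nestInt`, and induction on the number of remaining rounds yields the nested integral.
-/

open MeasureTheory ProbabilityTheory Real

/-- The `K`-fold nested integral of eq. (59), written with fuel (so the full integral is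
`nestInt σ2 P N B K K 1`): `nestInt σ2 P N B K 0 x = 1` and fuel `j+1` integrates the
variable `x_k` with `k = K − j` over `(x_{k−1}, 2^{B_k})` against
`x_k^{1/N_k − 1}·x_{k−1}^{−1/N_k}·exp(−(σ²/P_k)(x_k/x_{k−1})^{1/N_k})`. -/
noncomputable def nestInt (σ2 : ℝ) (P N B : ℕ → ℝ) (K : ℕ) : ℕ → ℝ → ℝ
  | 0, _ => 1
  | (j + 1), x =>
      ∫ t in Set.Ioo x ((2 : ℝ) ^ (B (K - j))),
        t ^ (1 / N (K - j) - 1) * x ^ (-(1 / N (K - j)))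
          * Real.exp (-(σ2 / P (K - j)) * (t / x) ^ (1 / N (K - j)))
          * nestInt σ2 P N B K j t

open Set Function

theorem ProbabilityTheory.IndepFun.measure_preimage_prodMk_eq_lintegral
    {Ω α β : Type*} [MeasurableSpace Ω] [MeasurableSpace α] [MeasurableSpace β]
    {μ : Measure Ω} [IsFiniteMeasure μ] {f : Ω → α} {g : Ω → β} (hfg : IndepFun f g μ)
    (hf : Measurable f) (hg : Measurable g) {C : Set (α × β)} (hC : MeasurableSet C) :
    μ ((fun ω => (f ω, g ω)) ⁻¹' C) = ∫⁻ a, μ (g ⁻¹' (Prod.mk a ⁻¹' C)) ∂μ.map f := by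
  rw [← Measure.map_apply (hf.prodMk hg) hC,
    (indepFun_iff_map_prod_eq_prod_map_map hf.aemeasurable hg.aemeasurable).1 hfg,
    Measure.prod_apply hC]
  exact lintegral_congr fun a => Measure.map_apply hg (measurable_prodMk_left hC)

theorem ProbabilityTheory.iIndepFun.measure_preimage_eq_lintegral_update
    {Ω ι β : Type*} [MeasurableSpace Ω] [MeasurableSpace β] [DecidableEq ι] [Inhabited β]
    {μ : Measure Ω} [IsProbabilityMeasure μ] {X : ι → Ω → β} (hX : iIndepFun X μ)
    (hmeas : ∀ i, Measurable (X i)) (i : ι) (T : Finset ι) {E : Set (ι → β)}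
    (hE : MeasurableSet E) (hET : ∀ v w, (∀ l ∈ T, v l = w l) → (v ∈ E ↔ w ∈ E)) :
    μ ((fun ω l => X l ω) ⁻¹' E)
      = ∫⁻ y, μ ((fun ω => update (fun l => X l ω) i y) ⁻¹' E) ∂μ.map (X i) := by
  set S := T.erase i
  -- `g` keeps only the coordinates in `S`: it is independent of `X i`, and as `E` only reads
  -- coordinates in `T`, replacing `X` by `g` away from `i` does not change membership in `E`.
  let extend : (S → β) → ι → β := fun v l => if h : l ∈ S then v ⟨l, h⟩ else default
  have hextend : Measurable extend := by
    refine measurable_pi_lambda _ fun l => ?_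
    by_cases h : l ∈ S
    · simpa [extend, h] using measurable_pi_apply (⟨l, h⟩ : S)
    · simp [extend, h]
  set g : Ω → ι → β := fun ω => extend fun j => X j ω
  have hg : Measurable g := hextend.comp (measurable_pi_lambda _ fun j => hmeas j)
  have hind : IndepFun (X i) g μ := by
    have hiS : Disjoint {i} S := by simp [S]
    exact (hX.indepFun_finset {i} S hiS hmeas).comp
      (measurable_pi_apply ⟨i, Finset.mem_singleton_self i⟩) hextend
  have hupdate : ∀ y ω, update (g ω) i y ∈ E ↔ update (fun l => X l ω) i y ∈ E := by
    refine fun y ω => hET _ _ fun l hl => ?_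
    by_cases hli : l = i
    · subst hli; simp
    · have hlS : l ∈ S := Finset.mem_erase.2 ⟨hli, hl⟩
      simp [update_of_ne hli, g, extend, hlS]
  have hC : MeasurableSet {p : β × (ι → β) | update p.2 i p.1 ∈ E} :=
    hE.preimage (measurable_update'.comp measurable_swap)
  calc μ ((fun ω l => X l ω) ⁻¹' E)
      = μ ((fun ω => (X i ω, g ω)) ⁻¹' {p | update p.2 i p.1 ∈ E}) := by
        congr 1; ext ω; simp [hupdate]
    _ = _ := by
        rw [hind.measure_preimage_prodMk_eq_lintegral (hmeas i) hg hC]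
        congr 1; ext y; congr 1; ext ω; exact hupdate y ω

theorem lintegral_expMeasure_one (F : ℝ → ENNReal) :
    ∫⁻ y, F y ∂expMeasure 1 = ∫⁻ y in Ioi 0, ENNReal.ofReal (exp (-y)) * F y := by
  have hpdf : exponentialPDF 1 * F
      = (Ici 0).indicator fun y => ENNReal.ofReal (exp (-y)) * F y := by
    ext y
    by_cases hy : 0 ≤ y <;> simp [exponentialPDF_eq, hy]
  rw [show expMeasure 1 = volume.withDensity (exponentialPDF 1) from rfl,
    lintegral_withDensity_eq_lintegral_mul_non_measurable _
      (f := exponentialPDF 1) (measurable_exponentialPDFReal 1).ennreal_ofReal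
      (.of_forall fun _ => ENNReal.ofReal_lt_top), hpdf, lintegral_indicator measurableSet_Ici,
    setLIntegral_congr Ioi_ae_eq_Ici]

noncomputable def roundKernel (σ2 P N x t : ℝ) : ℝ :=
  t ^ (1 / N - 1) * x ^ (-(1 / N)) * exp (-(σ2 / P) * (t / x) ^ (1 / N))

theorem roundKernel_nonneg (σ2 P N : ℝ) {x t : ℝ} (hx : 0 ≤ x) (ht : 0 ≤ t) :
    0 ≤ roundKernel σ2 P N x t := by
  unfold roundKernel; positivity

theorem measurable_roundKernel (σ2 P N : ℝ) : Measurable (uncurry (roundKernel σ2 P N)) := by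
  unfold roundKernel; fun_prop

section ChangeOfVariables

variable {σ2 P N x : ℝ}

theorem abs_mul_exp_eq_roundKernel (hσ : 0 < σ2) (hP : 0 < P) (hN : 0 < N) (hx : 0 < x)
    {t : ℝ} (ht : 0 < t) :
    |σ2 / P * (1 / N * (t / x) ^ (1 / N - 1) * x⁻¹)| * exp (-(σ2 / P * ((t / x) ^ (1 / N) - 1)))
      = σ2 / (N * P) * exp (σ2 / P) * roundKernel σ2 P N x t := by
  have hexp : exp (-(σ2 / P * ((t / x) ^ (1 / N) - 1)))
      = exp (σ2 / P) * exp (-(σ2 / P) * (t / x) ^ (1 / N)) := by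
    rw [← exp_add]; ring_nf
  have hpow : (t / x) ^ (1 / N - 1) * x⁻¹ = t ^ (1 / N - 1) * x ^ (-(1 / N)) := by
    rw [div_rpow ht.le hx.le, rpow_sub_one hx.ne', rpow_neg hx.le]
    field_simp
  rw [abs_of_nonneg (by positivity), hexp, roundKernel, mul_assoc (1 / N), hpow]
  field_simp

/-- With `y = |h_k|²`, `t = x·(1 + y·P/σ2)^N` is `x_k = x_{k-1}·(1 + γ_k)^{N_k}`. -/
theorem lintegral_exp_neg_mul_comp_gain (hσ : 0 < σ2) (hP : 0 < P) (hN : 0 < N) (hx : 0 < x)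
    (H : ℝ → ENNReal) :
    ∫⁻ y in Ioi 0, ENNReal.ofReal (exp (-y)) * H (x * (1 + y * P / σ2) ^ N)
      = ∫⁻ t in Ioi x,
          ENNReal.ofReal (σ2 / (N * P) * exp (σ2 / P) * roundKernel σ2 P N x t) * H t := by
  set φ : ℝ → ℝ := fun y => x * (1 + y * P / σ2) ^ N
  set f : ℝ → ℝ := fun t => σ2 / P * ((t / x) ^ (1 / N) - 1)
  have hφ : MapsTo φ (Ioi 0) (Ioi x) := fun y (hy : 0 < y) =>
    lt_mul_of_one_lt_right hx (one_lt_rpow (lt_add_of_pos_right _ (by positivity)) hN)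
  have hf : MapsTo f (Ioi x) (Ioi 0) := fun t (ht : x < t) =>
    mul_pos (by positivity) (sub_pos.2 (one_lt_rpow ((one_lt_div hx).2 ht) (by positivity)))
  have hφf : LeftInvOn φ f (Ioi x) := fun t (ht : x < t) => by
    have htx : 0 < t / x := div_pos (hx.trans ht) hx
    have hgain : 1 + f t * P / σ2 = (t / x) ^ (1 / N) := by simp only [f]; field_simp; ring
    simp only [φ]
    rw [hgain, ← rpow_mul htx.le, one_div_mul_cancel hN.ne', rpow_one]
    field_simp
  have hfφ : LeftInvOn f φ (Ioi 0) := fun y (hy : 0 < y) => by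
    simp only [f, φ]
    rw [mul_div_cancel_left₀ _ hx.ne', ← rpow_mul (by positivity), mul_one_div_cancel hN.ne',
      rpow_one]
    field_simp; ring
  have hbij : BijOn f (Ioi x) (Ioi 0) := InvOn.bijOn ⟨hφf, hfφ⟩ hf hφ
  have hderiv : ∀ t ∈ Ioi x,
      HasDerivWithinAt f (σ2 / P * (1 / N * (t / x) ^ (1 / N - 1) * x⁻¹)) (Ioi x) t := by
    intro t ht
    have htx : t / x ≠ 0 := (div_pos (hx.trans ht) hx).ne'
    have hpow := (((hasDerivAt_id t).div_const x).rpow_const (p := 1 / N) (.inl htx)).sub_const 1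
    exact ((hpow.const_mul (σ2 / P)).congr_deriv (by simp only [id, one_div]; ring))
      |>.hasDerivWithinAt
  rw [← hbij.image_eq,
    lintegral_image_eq_lintegral_abs_deriv_mul measurableSet_Ioi hderiv hbij.injOn]
  refine setLIntegral_congr_fun measurableSet_Ioi fun t ht => ?_
  rw [show x * (1 + f t * P / σ2) ^ N = t from hφf ht, ← mul_assoc,
    ← ENNReal.ofReal_mul (abs_nonneg _), abs_mul_exp_eq_roundKernel hσ hP hN hx (hx.trans ht)]

end ChangeOfVariables

theorem measurable_nestInt (σ2 : ℝ) (P N B : ℕ → ℝ) (K j : ℕ) :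
    Measurable (nestInt σ2 P N B K j) := by
  induction j with
  | zero => exact measurable_const
  | succ j ih =>
    set M : ℝ := 2 ^ B (K - j)
    have hint : nestInt σ2 P N B K (j + 1) = fun x => ∫ t, {p : ℝ × ℝ | p.2 ∈ Ioo p.1 M}.indicator
        (fun p => roundKernel σ2 (P (K - j)) (N (K - j)) p.1 p.2 * nestInt σ2 P N B K j p.2)
        (x, t) := by
      funext x; rw [nestInt, ← integral_indicator measurableSet_Ioo]; rfl
    have hS : MeasurableSet {p : ℝ × ℝ | p.2 ∈ Ioo p.1 M} :=
      (measurableSet_lt measurable_fst measurable_snd).inter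
        (measurableSet_lt measurable_snd measurable_const)
    have hF := ((measurable_roundKernel σ2 (P (K - j)) (N (K - j))).mul
      (ih.comp measurable_snd)).indicator hS
    rw [hint]
    exact hF.stronglyMeasurable.integral_prod_right'.measurable

/-- Rounds `k₀, …, K` are all in outage, `x` being the value `x_{k₀-1}` before round `k₀`. -/
def outageSet (σ2 : ℝ) (P N B : ℕ → ℝ) (K k₀ : ℕ) (x : ℝ) : Set (ℕ → ℝ) :=
  {v | ∀ k ∈ Finset.Icc k₀ K, x * ∏ l ∈ Finset.Icc k₀ k, (1 + v l * P l / σ2) ^ N l < 2 ^ B k}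

section OutageSet

variable {σ2 : ℝ} {P N B : ℕ → ℝ} {K : ℕ}

theorem measurableSet_outageSet (k₀ : ℕ) (x : ℝ) :
    MeasurableSet (outageSet σ2 P N B K k₀ x) := by
  simp only [outageSet, ofPred_forall]
  exact .iInter fun k => .iInter fun _ => measurableSet_lt (by fun_prop) measurable_const

theorem mem_outageSet_congr {k₀ : ℕ} {v w : ℕ → ℝ} (hvw : ∀ l ∈ Finset.Icc k₀ K, v l = w l)
    (x : ℝ) : v ∈ outageSet σ2 P N B K k₀ x ↔ w ∈ outageSet σ2 P N B K k₀ x := by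
  refine forall₂_congr fun k hk => ?_
  rw [Finset.prod_congr rfl fun l hl => by rw [hvw l (by grind)]]

theorem update_mem_outageSet_iff {k₀ : ℕ} (hk₀ : k₀ ≤ K) (v : ℕ → ℝ) (x y : ℝ) :
    update v k₀ y ∈ outageSet σ2 P N B K k₀ x ↔
      x * (1 + y * P k₀ / σ2) ^ N k₀ < 2 ^ B k₀ ∧
        v ∈ outageSet σ2 P N B K (k₀ + 1) (x * (1 + y * P k₀ / σ2) ^ N k₀) := by
  have hprod : ∀ k, k₀ ≤ k → ∏ l ∈ Finset.Icc k₀ k, (1 + update v k₀ y l * P l / σ2) ^ N l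
      = (1 + y * P k₀ / σ2) ^ N k₀ * ∏ l ∈ Finset.Icc (k₀ + 1) k, (1 + v l * P l / σ2) ^ N l := by
    intro k hk
    rw [← Finset.insert_Icc_add_one_left_eq_Icc hk, Finset.prod_insert (by simp), update_self]
    congr 1
    exact Finset.prod_congr rfl fun l hl => by rw [update_of_ne (by grind)]
  simp only [outageSet, mem_ofPred_eq, ← Finset.insert_Icc_add_one_left_eq_Icc hk₀,
    Finset.forall_mem_insert]
  refine and_congr ?_ (forall₂_congr fun k hk => ?_)
  · rw [hprod k₀ le_rfl, Finset.Icc_eq_empty (by omega), Finset.prod_empty, mul_one]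
  · rw [hprod k (by grind), mul_assoc]

variable {Ω : Type*} [MeasurableSpace Ω] {μ : Measure Ω} [IsProbabilityMeasure μ]
  {X : ℕ → Ω → ℝ}

theorem measure_preimage_outageSet_eq_lintegral (hmeas : ∀ k, Measurable (X k))
    (hindep : iIndepFun X μ) {k₀ : ℕ} (hk₀ : k₀ ≤ K) (hlaw : μ.map (X k₀) = expMeasure 1)
    (hσ : 0 < σ2) (hP : 0 < P k₀) (hN : 0 < N k₀) {x : ℝ} (hx : 0 < x) :
    μ ((fun ω l => X l ω) ⁻¹' outageSet σ2 P N B K k₀ x)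
      = ∫⁻ t in Ioo x (2 ^ B k₀),
          ENNReal.ofReal (σ2 / (N k₀ * P k₀) * exp (σ2 / P k₀) * roundKernel σ2 (P k₀) (N k₀) x t)
            * μ ((fun ω l => X l ω) ⁻¹' outageSet σ2 P N B K (k₀ + 1) t) := by
  set G := fun t => μ ((fun ω l => X l ω) ⁻¹' outageSet σ2 P N B K (k₀ + 1) t)
  have hcond : ∀ y, μ ((fun ω => update (fun l => X l ω) k₀ y) ⁻¹' outageSet σ2 P N B K k₀ x)
      = (Iio (2 ^ B k₀)).indicator G (x * (1 + y * P k₀ / σ2) ^ N k₀) := by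
    intro y
    by_cases h : x * (1 + y * P k₀ / σ2) ^ N k₀ < 2 ^ B k₀
    · rw [indicator_of_mem (mem_Iio.2 h)]
      congr 1; ext ω; simp [update_mem_outageSet_iff hk₀, h]
    · rw [indicator_of_notMem (mt mem_Iio.1 h)]
      convert measure_empty (μ := μ); ext ω; simp [update_mem_outageSet_iff hk₀, h]
  rw [hindep.measure_preimage_eq_lintegral_update hmeas k₀ (Finset.Icc k₀ K)
      (measurableSet_outageSet k₀ x) (fun v w h => mem_outageSet_congr h x), hlaw,
    lintegral_congr hcond, lintegral_expMeasure_one, lintegral_exp_neg_mul_comp_gain hσ hP hN hx,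
    ← Iio_inter_Ioi, ← Measure.restrict_restrict measurableSet_Iio,
    ← lintegral_indicator measurableSet_Iio]
  simp_rw [indicator_mul_right]
  rfl

-- `K - j + 1` is the first of the last `j` rounds, matching the fuel convention of `nestInt`.
theorem toReal_measure_preimage_outageSet (hmeas : ∀ k, Measurable (X k))
    (hindep : iIndepFun X μ) (hlaw : ∀ k ∈ Finset.Icc 1 K, μ.map (X k) = expMeasure 1)
    (hσ : 0 < σ2) (hP : ∀ k ∈ Finset.Icc 1 K, 0 < P k) (hN : ∀ k ∈ Finset.Icc 1 K, 0 < N k)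
    {j : ℕ} (hj : j ≤ K) {x : ℝ} (hx : 0 < x) :
    (μ ((fun ω l => X l ω) ⁻¹' outageSet σ2 P N B K (K - j + 1) x)).toReal
      = (∏ k ∈ Finset.Icc (K - j + 1) K, σ2 / (N k * P k) * exp (σ2 / P k))
          * nestInt σ2 P N B K j x := by
  induction j generalizing x with
  | zero => simp [outageSet, nestInt]
  | succ j ih =>
    have hk₀ : K - j ∈ Finset.Icc 1 K := Finset.mem_Icc.2 ⟨by omega, by omega⟩
    set c := ∏ k ∈ Finset.Icc (K - j + 1) K, σ2 / (N k * P k) * exp (σ2 / P k)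
    set a := σ2 / (N (K - j) * P (K - j)) * exp (σ2 / P (K - j))
    have hκ : ∀ t, x < t → 0 ≤ a * roundKernel σ2 (P (K - j)) (N (K - j)) x t := fun t ht =>
      mul_nonneg (by have := hP _ hk₀; have := hN _ hk₀; positivity)
        (roundKernel_nonneg _ _ _ hx.le (hx.trans ht).le)
    -- the induction hypothesis identifies `c * nestInt` with a probability, hence `0 ≤`
    have hc : ∀ t, x < t → 0 ≤ c * nestInt σ2 P N B K j t := fun t ht =>
      ih (by omega) (hx.trans ht) ▸ ENNReal.toReal_nonneg
    have hmeas_kernel := measurable_roundKernel σ2 (P (K - j)) (N (K - j))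
    have hmeas_nestInt := measurable_nestInt σ2 P N B K j
    rw [show K - (j + 1) + 1 = K - j by omega, measure_preimage_outageSet_eq_lintegral hmeas
      hindep (by omega) (hlaw _ hk₀) hσ (hP _ hk₀) (hN _ hk₀) hx,
      setLIntegral_congr_fun measurableSet_Ioo fun t ht => by
        rw [← ENNReal.ofReal_toReal (measure_ne_top μ _), ih (by omega) (hx.trans ht.1),
          ← ENNReal.ofReal_mul (hκ t ht.1)],
      ← integral_eq_lintegral_of_nonneg_ae ((ae_restrict_iff' measurableSet_Ioo).2
        (.of_forall fun t ht => mul_nonneg (hκ t ht.1) (hc t ht.1))) (by fun_prop),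
      nestInt, ← Finset.insert_Icc_add_one_left_eq_Icc (by omega : K - j ≤ K),
      Finset.prod_insert (by simp), ← integral_const_mul]
    congr 1; funext t; simp only [roundKernel, a, c]; ring

end OutageSet

theorem outage_prob_K_rounds_integral_general
    {Ω : Type*} [MeasurableSpace Ω] (μ : Measure Ω) [IsProbabilityMeasure μ]
    (K : ℕ) (X : ℕ → Ω → ℝ) (hmeas : ∀ k, Measurable (X k))
    (hindep : iIndepFun X μ)
    (hlaw : ∀ k ∈ Finset.Icc 1 K, μ.map (X k) = expMeasure 1)
    (σ2 : ℝ) (hσ : 0 < σ2) (P N B : ℕ → ℝ)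
    (hP : ∀ k ∈ Finset.Icc 1 K, 0 < P k)
    (hN : ∀ k ∈ Finset.Icc 1 K, 0 < N k) :
    (μ {ω | ∀ k ∈ Finset.Icc 1 K,
        ∏ l ∈ Finset.Icc 1 k, (1 + X l ω * P l / σ2) ^ (N l)
          < (2 : ℝ) ^ (B k)}).toReal
      = (∏ k ∈ Finset.Icc 1 K, σ2 / (N k * P k) * Real.exp (σ2 / P k))
          * nestInt σ2 P N B K K 1 := by
  have h := toReal_measure_preimage_outageSet (B := B) hmeas hindep hlaw hσ hP hN le_rfl one_pos
  rw [Nat.sub_self, zero_add] at h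
  convert h using 3
  ext ω
  simp [outageSet]

/-- **Integral representation of the exact `K`-round outage probability of VL-XP-HARQ**
(eq. (59)), obtained by the change of variables `x_k = Π_{l=1}^k (1+γ_l)^{N_l}`. -/
theorem outage_prob_K_rounds_integral
    {Ω : Type*} [MeasurableSpace Ω] (μ : Measure Ω) [IsProbabilityMeasure μ]
    (K : ℕ) (hK : 1 ≤ K) (X : ℕ → Ω → ℝ) (hmeas : ∀ k, Measurable (X k))
    (hindep : iIndepFun X μ)
    (hlaw : ∀ k ∈ Finset.Icc 1 K, μ.map (X k) = expMeasure 1)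
    (σ2 : ℝ) (hσ : 0 < σ2) (P N b B : ℕ → ℝ)
    (hP : ∀ k ∈ Finset.Icc 1 K, 0 < P k)
    (hN : ∀ k ∈ Finset.Icc 1 K, 0 < N k)
    (hb : ∀ k ∈ Finset.Icc 1 K, 0 < b k)
    (hB : ∀ k, B k = ∑ l ∈ Finset.Icc 1 k, b l) :
    (μ {ω | ∀ k ∈ Finset.Icc 1 K,
        ∏ l ∈ Finset.Icc 1 k, (1 + X l ω * P l / σ2) ^ (N l)
          < (2 : ℝ) ^ (B k)}).toReal
      = (∏ k ∈ Finset.Icc 1 K, σ2 / (N k * P k) * Real.exp (σ2 / P k))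
          * nestInt σ2 P N B K K 1 :=
  outage_prob_K_rounds_integral_general μ K X hmeas hindep hlaw σ2 hσ P N B hP hN
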